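/- There exists a cover and a family of compatible-looking sections that admits no gluing: with L₁ = L₂ = L = {R,S} (unary relations), X₁ = {x,u}, X₂ = {y,v}, X = {z,w}, cover maps f₁ : x ↦ z, u ↦ w and f₂ : y ↦ z, v ↦ w, and sections s₁ = closure of {R(x), S(u)} and s₂ = closure of {S(y), R(v)}, there is no s ∈ F(L,X) with F(f₁)(s) = s₁ and F(f₂)(s) = s₂. -/

import Mathlib

/-- A literal: a polarity, a relation symbol, and an arity-indexed tuple of variables. -/
structure Lit (Rel Var : Type) (ar : Rel → ℕ) where
  pos : Bool
  rel : Rel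
  args : Fin (ar rel) → Var

namespace Lit
variable {Rel Var W : Type} {ar : Rel → ℕ}

/-- Substitution of variables in a literal. -/
def map (f : Var → W) (l : Lit Rel Var ar) : Lit Rel W ar :=
  ⟨l.pos, l.rel, f ∘ l.args⟩

/-- The complementary literal. -/
def compl (l : Lit Rel Var ar) : Lit Rel Var ar := ⟨!l.pos, l.rel, l.args⟩

/-- The literal is over vocabulary `L` and variable set `X`. -/
def Over (L : Set Rel) (X : Set Var) (l : Lit Rel Var ar) : Prop :=
  l.rel ∈ L ∧ ∀ i, l.args i ∈ X

end Lit

/-- A set of literals is consistent if it contains no complementary pair. -/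
def Consistent {Rel Var : Type} {ar : Rel → ℕ} (s : Set (Lit Rel Var ar)) : Prop :=
  ∀ l ∈ s, l.compl ∉ s

/-- An element of `F(L,X)`: a consistent (deductively closed, which is trivial for
literals) set of literals over vocabulary `L` and variables `X`. -/
def IsSection {Rel Var : Type} {ar : Rel → ℕ} (L : Set Rel) (X : Set Var)
    (s : Set (Lit Rel Var ar)) : Prop :=
  (∀ l ∈ s, l.Over L X) ∧ Consistent s

/-- The restriction map `F(f) : F(L',Y) → F(L,X)` along `f : (L,X) → (L',Y)`:
`F(f)(s) ⊢ ±A(x⃗) iff s ⊢ ±A(f(x⃗))`. -/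
def restrict {Rel Var : Type} {ar : Rel → ℕ} (f : Var → Var) (L : Set Rel) (X : Set Var)
    (s : Set (Lit Rel Var ar)) : Set (Lit Rel Var ar) :=
  { l | l.Over L X ∧ l.map f ∈ s }

/-- Arities: both relation symbols `R = 0` and `S = 1` are unary. -/
def ar2 : Fin 2 → ℕ := fun _ => 1

/-- The positive unary literal `r(v)`. -/
def atm (r : Fin 2) (v : ℕ) : Lit (Fin 2) ℕ ar2 := ⟨true, r, fun _ => v⟩

theorem mem_restrict_of_map_eq {Rel Var : Type} {ar : Rel → ℕ} {f g : Var → Var}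
    {L L' : Set Rel} {X X' : Set Var} {s : Set (Lit Rel Var ar)} {l l' : Lit Rel Var ar}
    (hl : l.Over L X) (hmap : l.map f = l'.map g) (hl' : l' ∈ restrict g L' X' s) :
    l ∈ restrict f L X s :=
  ⟨hl, hmap ▸ hl'.2⟩

theorem atm_map (f : ℕ → ℕ) (r : Fin 2) (v : ℕ) : (atm r v).map f = atm r (f v) := rfl

theorem atm_over {L : Set (Fin 2)} {X : Set ℕ} {r : Fin 2} {v : ℕ} (hr : r ∈ L) (hv : v ∈ X) :
    (atm r v).Over L X :=
  ⟨hr, fun _ => hv⟩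

theorem atm_inj {r r' : Fin 2} {v v' : ℕ} : atm r v = atm r' v' ↔ r = r' ∧ v = v' := by
  refine ⟨fun h => ?_, fun ⟨hr, hv⟩ => hr ▸ hv ▸ rfl⟩
  obtain ⟨-, rfl, hargs⟩ := Lit.mk.inj h
  exact ⟨rfl, congrFun (eq_of_heq hargs) ⟨0, Nat.one_pos⟩⟩

/-- With `x = 0, u = 1, y = 2, v = 3, z = 4, w = 5`, `R = 0`, `S = 1`. -/
theorem no_gluing_example :
    ¬ ∃ s : Set (Lit (Fin 2) ℕ ar2),
      IsSection {0, 1} {4, 5} s ∧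
      restrict (fun n => if n = 0 then 4 else 5) {0, 1} {0, 1} s = {atm 0 0, atm 1 1} ∧
      restrict (fun n => if n = 2 then 4 else 5) {0, 1} {2, 3} s = {atm 1 2, atm 0 3} := by
  rintro ⟨s, -, h₁, h₂⟩
  -- `R(x) ∈ s₁` forces `R(z) ∈ s`, hence `R(y)` in the restriction along `f₂`, but `R(y) ∉ s₂`.
  have hRx : atm 0 0 ∈ restrict (fun n => if n = 0 then 4 else 5) {0, 1} {0, 1} s := by
    rw [h₁]; exact Or.inl rfl
  have hRy : atm 0 2 ∈ restrict (fun n => if n = 2 then 4 else 5) {0, 1} {2, 3} s :=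
    mem_restrict_of_map_eq (atm_over (by simp) (by simp)) (by simp [atm_map]) hRx
  rw [h₂] at hRy
  simp [atm_inj] at hRy
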